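/- arXiv:1603.03059 — 2 statements merged into one kernel-verified Lean document; each statement's English description precedes it below -/
import Mathlib

section
/- Every good finite word over S = {1,2,3} that has prefix 1231 and contains exactly one occurrence of 1231 as a factor is a prefix of one of the three words 12312131232123, 123132312131232123, 12313231232123. -/
/-!
Alphabet encodings:
* `S = {1,2,3}` is `Fin 3` with `1 ↦ 0`, `2 ↦ 1`, `3 ↦ 2` (so `1 < 2 < 3` matches `0 < 1 < 2`).
* `T = {a,b,c,d}` is `Fin 4` with `a ↦ 0`, `b ↦ 1`, `c ↦ 2`, `d ↦ 3`.
* `U = {a,c,d}` is `Fin 3` with `a ↦ 0`, `c ↦ 1`, `d ↦ 2` (so `a < c < d` matches `0 < 1 < 2`).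
-/

/-- The six forbidden factors `1231321, 1321231, 2132312, 2312132, 3123213, 3213123`
(images of the letter pattern `xyzxzyx`). -/
def Forbidden : List (List (Fin 3)) :=
  [[0,1,2,0,2,1,0], [0,2,1,0,1,2,0], [1,0,2,1,2,0,1],
   [1,2,0,1,0,2,1], [2,0,1,2,1,0,2], [2,1,0,2,0,1,2]]

/-- A finite word is square-free if it has no nonempty factor `x ++ x`. -/
def SquareFreeL {α : Type*} (w : List α) : Prop :=
  ∀ x : List α, x ≠ [] → ¬ (x ++ x) <:+: w

/-- A finite word over `S` is factor-good if no forbidden factor occurs in it. -/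
def FactorGoodL (w : List (Fin 3)) : Prop :=
  ∀ p ∈ Forbidden, ¬ p <:+: w

/-- A finite word over `S` is good if it is square-free and factor-good. -/
def GoodL (w : List (Fin 3)) : Prop := SquareFreeL w ∧ FactorGoodL w

/-- The factor of an ω-word `w` starting at position `i`, of length `n`. -/
def factorAtN {α : Type*} (w : ℕ → α) (i n : ℕ) : List α :=
  (List.range n).map fun k => w (i + k)

/-- `l` is a (finite) factor of the ω-word `w`. -/
def IsFactorN {α : Type*} (l : List α) (w : ℕ → α) : Prop :=
  ∃ i : ℕ, l = factorAtN w i l.length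

/-- An ω-word is square-free if no nonempty `x ++ x` is a factor of it. -/
def SquareFreeN {α : Type*} (w : ℕ → α) : Prop :=
  ∀ x : List α, x ≠ [] → ¬ IsFactorN (x ++ x) w

/-- An ω-word over `S` is factor-good if no forbidden factor occurs in it. -/
def FactorGoodN (w : ℕ → Fin 3) : Prop :=
  ∀ p ∈ Forbidden, ¬ IsFactorN p w

/-- An ω-word over `S` is good if it is square-free and factor-good. -/
def GoodN (w : ℕ → Fin 3) : Prop := SquareFreeN w ∧ FactorGoodN w

/-- The factor of a ℤ-word `w` starting at position `i`, of length `n`. -/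
def factorAtZ {α : Type*} (w : ℤ → α) (i : ℤ) (n : ℕ) : List α :=
  (List.range n).map fun k => w (i + k)

/-- `l` is a (finite) factor of the ℤ-word `w`. -/
def IsFactorZ {α : Type*} (l : List α) (w : ℤ → α) : Prop :=
  ∃ i : ℤ, l = factorAtZ w i l.length

/-- A ℤ-word is square-free if no nonempty `x ++ x` is a factor of it. -/
def SquareFreeZ {α : Type*} (w : ℤ → α) : Prop :=
  ∀ x : List α, x ≠ [] → ¬ IsFactorZ (x ++ x) w

/-- A ℤ-word over `S` is factor-good if no forbidden factor occurs in it. -/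
def FactorGoodZ (w : ℤ → Fin 3) : Prop :=
  ∀ p ∈ Forbidden, ¬ IsFactorZ p w

/-- A ℤ-word over `S` is good if it is square-free and factor-good. -/
def GoodZ (w : ℤ → Fin 3) : Prop := SquareFreeZ w ∧ FactorGoodZ w

/-- The ω-word `w` is the infinite concatenation `blocks 0 · blocks 1 · blocks 2 ⋯`. -/
def NConcat {α : Type*} (w : ℕ → α) (blocks : ℕ → List α) : Prop :=
  ∃ p : ℕ → ℕ, p 0 = 0 ∧ (∀ i, p (i + 1) = p i + (blocks i).length) ∧
    ∀ i, blocks i = factorAtN w (p i) (blocks i).length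

/-- The ℤ-word `w` is the bi-infinite concatenation `⋯ blocks (-1) · blocks 0 · blocks 1 ⋯`
(up to a shift of indexing). -/
def ZConcat {α : Type*} (w : ℤ → α) (blocks : ℤ → List α) : Prop :=
  ∃ p : ℤ → ℤ, (∀ i, p (i + 1) = p i + (blocks i).length) ∧
    ∀ i, blocks i = factorAtZ w (p i) (blocks i).length

/-- The morphism `f : T* → S*` on letters:
`f(a) = 1213`, `f(b) = 123`, `f(c) = 1323`, `f(d) = 1232`. -/
def fL : Fin 4 → List (Fin 3) := ![[0,1,0,2], [0,1,2], [0,2,1,2], [0,1,2,1]]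

/-- The morphism `f : T* → S*` on finite words. -/
def fW (v : List (Fin 4)) : List (Fin 3) := (v.map fL).flatten

/-- The inclusion `U → T`: `a ↦ a`, `c ↦ c`, `d ↦ d`. -/
def uT : Fin 3 → Fin 4 := ![0, 2, 3]

/-- Does `g` insert the letter `b` between `x` and `y`?  True exactly for the
pairs `ac`, `da`, `dc`. -/
def needB (x y : Fin 3) : Bool :=
  (x == 0 && y == 1) || (x == 2 && y == 0) || (x == 2 && y == 1)

/-- The map `g : U* → T*`, replacing each factor `ac` by `abc`, `da` by `dba`
and `dc` by `dbc`. -/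
def gW : List (Fin 3) → List (Fin 4)
  | [] => []
  | [x] => [uT x]
  | x :: y :: r => (uT x :: (if needB x y then [(1 : Fin 4)] else [])) ++ gW (y :: r)

/-- The block of `f(g(u))` contributed by position `i` of the ω-word `u` over `U`:
the `f`-image of `u i`, followed by `f(b) = 123` when `g` inserts a `b` after `u i`. -/
def fgBlockN (u : ℕ → Fin 3) (i : ℕ) : List (Fin 3) :=
  fL (uT (u i)) ++ (if needB (u i) (u (i + 1)) then fL 1 else [])

/-- The block of `f(g(u))` contributed by position `i` of the ℤ-word `u` over `U`. -/
def fgBlockZ (u : ℤ → Fin 3) (i : ℤ) : List (Fin 3) :=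
  fL (uT (u i)) ++ (if needB (u i) (u (i + 1)) then fL 1 else [])

/-- The letter permutation `π` of `S`: fixes `1`, interchanges `2` and `3`. -/
def pi3 : Fin 3 → Fin 3 := ![0, 2, 1]

/-- Lexicographic order on ω-words: `v ≤ w` iff `v = w` or at the first index
where they differ the letter of `v` is smaller. -/
def LexLeN {α : Type*} [LinearOrder α] (v w : ℕ → α) : Prop :=
  v = w ∨ ∃ n : ℕ, (∀ k < n, v k = w k) ∧ v n < w n

/-- The number of occurrences of `l` as a factor of `w`. -/
def occCount (l w : List (Fin 3)) : ℕ :=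
  ((List.range (w.length + 1)).filter fun i => l.isPrefixOf (w.drop i)).length

/-!
Being good and containing `1231` at most once is inherited by prefixes, so the words in
question form a tree rooted at `1231` that grows one letter at a time. Square-freeness is
decidable, since a square factor is a prefix of a suffix, so a finite check of all one-letter
extensions of prefixes of the three words shows that the tree never leaves those prefixes.
-/

theorem squareFreeL_iff_forall_tails {α : Type*} (w : List α) :
    SquareFreeL w ↔ ∀ t ∈ w.tails, ∀ x ∈ t.inits, x ≠ [] → ¬ x ++ x <+: t := by
  simp only [SquareFreeL, List.mem_tails, List.mem_inits]
  constructor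
  · intro h t ht x _ hx hxx
    exact h x hx (hxx.isInfix.trans ht.isInfix)
  · intro h x hx hxx
    obtain ⟨t, hxt, ht⟩ := List.infix_iff_prefix_suffix.mp hxx
    exact h t ht x ((List.prefix_append x x).trans hxt) hx hxt

instance {α : Type*} [DecidableEq α] : DecidablePred (SquareFreeL (α := α)) := fun w =>
  decidable_of_iff _ (squareFreeL_iff_forall_tails w).symm

instance : DecidablePred FactorGoodL := fun w =>
  inferInstanceAs (Decidable (∀ p ∈ Forbidden, ¬ p <:+: w))

instance : DecidablePred GoodL := fun w =>
  inferInstanceAs (Decidable (SquareFreeL w ∧ FactorGoodL w))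

theorem SquareFreeL.of_infix {α : Type*} {u w : List α} (hw : SquareFreeL w) (h : u <:+: w) :
    SquareFreeL u :=
  fun x hx hxx => hw x hx (hxx.trans h)

theorem FactorGoodL.of_infix {u w : List (Fin 3)} (hw : FactorGoodL w) (h : u <:+: w) :
    FactorGoodL u :=
  fun p hp hpu => hw p hp (hpu.trans h)

theorem GoodL.of_infix {u w : List (Fin 3)} (hw : GoodL w) (h : u <:+: w) : GoodL u :=
  ⟨hw.1.of_infix h, hw.2.of_infix h⟩

theorem occCount_mono_of_prefix (l : List (Fin 3)) {u w : List (Fin 3)} (h : u <+: w) :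
    occCount l u ≤ occCount l w := by
  simp only [occCount, ← List.countP_eq_length_filter]
  calc List.countP (fun i => l.isPrefixOf (u.drop i)) (List.range (u.length + 1))
      ≤ List.countP (fun i => l.isPrefixOf (w.drop i)) (List.range (u.length + 1)) :=
        List.countP_mono_left fun i _ hi => List.isPrefixOf_iff_prefix.mpr
          ((List.isPrefixOf_iff_prefix.mp hi).trans (h.drop i))
    _ ≤ List.countP (fun i => l.isPrefixOf (w.drop i)) (List.range (w.length + 1)) :=
        (List.range_sublist.mpr (by have := h.length_le; omega)).countP_le

theorem exists_prefix_of_forall_concat_prefix {α : Type*} {P : List α → Prop}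
    (hP : ∀ ⦃u v⦄, u <+: v → P v → P u) {M : List (List α)} {b : List α}
    (hb : ∃ m ∈ M, b <+: m)
    (hstep : ∀ m ∈ M, ∀ u, u <+: m → ∀ a, b <+: u ++ [a] → P (u ++ [a]) →
      ∃ m' ∈ M, u ++ [a] <+: m')
    (w : List α) (hbw : b <+: w) (hw : P w) : ∃ m ∈ M, w <+: m := by
  induction w using List.reverseRecOn with
  | nil => rwa [List.prefix_nil.mp hbw] at hb
  | append_singleton u a ih =>
    rcases List.prefix_concat_iff.mp hbw with rfl | hbu
    · exact hb
    · obtain ⟨m, hm, hum⟩ := ih hbu (hP (List.prefix_append u [a]) hw)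
      exact hstep m hm u hum a hbw hw

def maximalWords1231 : List (List (Fin 3)) :=
  [[0,1,2,0,1,0,2,0,1,2,1,0,1,2], [0,1,2,0,2,1,2,0,1,0,2,0,1,2,1,0,1,2],
   [0,1,2,0,2,1,2,0,1,2,1,0,1,2]]

theorem exists_mem_maximalWords1231_prefix_concat :
    ∀ m ∈ maximalWords1231, ∀ u ∈ m.inits, ∀ a : Fin 3, [0,1,2,0] <+: u ++ [a] →
      GoodL (u ++ [a]) ∧ occCount [0,1,2,0] (u ++ [a]) ≤ 1 →
      ∃ m' ∈ maximalWords1231, u ++ [a] <+: m' := by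
  decide

/-- Every good finite word over `S` with prefix `1231` containing exactly one
occurrence of `1231` is a prefix of `12312131232123`, `123132312131232123` or
`12313231232123`. -/
theorem stmt_8 (w : List (Fin 3)) (hg : GoodL w)
    (hp : [0,1,2,0] <+: w) (hocc : occCount [0,1,2,0] w = 1) :
    w <+: [0,1,2,0,1,0,2,0,1,2,1,0,1,2] ∨
    w <+: [0,1,2,0,2,1,2,0,1,0,2,0,1,2,1,0,1,2] ∨
    w <+: [0,1,2,0,2,1,2,0,1,2,1,0,1,2] := by
  have hprefix := exists_prefix_of_forall_concat_prefix
    (P := fun v => GoodL v ∧ occCount [0,1,2,0] v ≤ 1)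
    (fun u v huv hv => ⟨hv.1.of_infix huv.isInfix, (occCount_mono_of_prefix _ huv).trans hv.2⟩)
    ⟨_, List.mem_cons_self, by decide⟩
    (fun m hm u hu => exists_mem_maximalWords1231_prefix_concat m hm u ((List.mem_inits u m).mpr hu))
    w hp ⟨hg, hocc.le⟩
  simpa [maximalWords1231, or_assoc] using hprefix
end

section
/- Let t be a good ω-word over S = {1,2,3} of the form t = 1213·b₁·b₂·b₃·⋯ where each bᵢ ∈ {12, 123, 1232, 13, 1323}. Then t can be written as t = c₀·c₁·c₂·⋯ where each cᵢ ∈ {1213, 123, 1232, 1323}. -/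
/-!
In a good word the block `12` can only be followed by `13`, and (past the initial `1213`) the
block `13` can only be preceded by `12`: every other choice of the neighbouring blocks creates a
square or a forbidden factor within the next three blocks, as a bounded search confirms. Hence
the `13`'s are exactly the blocks following a `12`, and gluing each such pair into `1213`
regroups `t` into blocks from `{1213, 123, 1232, 1323}`.
-/

namespace List

variable {α : Type*}

def HasSquare (w : List α) : Prop :=
  ∃ u ∈ w.tails, ∃ x ∈ u.inits, x ≠ [] ∧ x ++ x <+: u

instance [DecidableEq α] (w : List α) : Decidable w.HasSquare := by
  unfold HasSquare; infer_instance

theorem HasSquare.exists_infix {w : List α} (h : w.HasSquare) :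
    ∃ x : List α, x ≠ [] ∧ x ++ x <:+: w := by
  obtain ⟨u, hu, x, -, hx, hxu⟩ := h
  exact ⟨x, hx, hxu.isInfix.trans ((mem_tails u w).1 hu).isInfix⟩

end List

section Factors

variable {α : Type*}

@[simp]
theorem length_factorAtN (w : ℕ → α) (i n : ℕ) : (factorAtN w i n).length = n := by
  simp [factorAtN]

@[simp]
theorem getElem_factorAtN (w : ℕ → α) (i n k : ℕ) (hk : k < (factorAtN w i n).length) :
    (factorAtN w i n)[k] = w (i + k) := by
  simp [factorAtN]

theorem factorAtN_add (w : ℕ → α) (i m n : ℕ) :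
    factorAtN w i (m + n) = factorAtN w i m ++ factorAtN w (i + m) n := by
  simp only [factorAtN, List.range_add, List.map_append, List.map_map]
  congr 1
  exact List.map_congr_left fun k _ => by simp only [Function.comp, Nat.add_assoc]

theorem IsFactorN.of_infix {w : ℕ → α} {l W : List α} (hW : IsFactorN W w) (h : l <:+: W) :
    IsFactorN l w := by
  obtain ⟨i, hi⟩ := hW
  obtain ⟨s, u, rfl⟩ := h
  refine ⟨i + s.length, List.ext_getElem (by simp) fun k hk _ => ?_⟩
  have hk' : s.length + k < (s ++ l ++ u).length := by simp; omega
  rw [getElem_factorAtN, Nat.add_assoc, ← getElem_factorAtN w i _ _ (by rw [← hi]; exact hk'),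
    ← List.getElem_of_eq hi hk']
  simp [List.getElem_append_left, List.getElem_append_right, hk]

end Factors

section Blocks

variable {α : Type*}

def blockSpan (b : ℕ → List α) (j k : ℕ) : List α :=
  ((List.range k).map fun i => b (j + i)).flatten

@[simp]
theorem blockSpan_zero (b : ℕ → List α) (j : ℕ) : blockSpan b j 0 = [] := rfl

theorem blockSpan_succ (b : ℕ → List α) (j k : ℕ) :
    blockSpan b j (k + 1) = blockSpan b j k ++ b (j + k) := by
  simp [blockSpan, List.range_succ]

theorem NConcat.blockSpan_eq {t : ℕ → α} {b : ℕ → List α} {p : ℕ → ℕ}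
    (hp : ∀ i, p (i + 1) = p i + (b i).length) (hpb : ∀ i, b i = factorAtN t (p i) (b i).length)
    (j k : ℕ) :
    p (j + k) = p j + (blockSpan b j k).length ∧
      blockSpan b j k = factorAtN t (p j) (blockSpan b j k).length := by
  induction k with
  | zero => simp [factorAtN]
  | succ k ih =>
    obtain ⟨hlen, hfac⟩ := ih
    rw [blockSpan_succ, List.length_append, ← Nat.add_assoc, hp, hlen, Nat.add_assoc]
    refine ⟨rfl, ?_⟩
    rw [factorAtN_add, ← hfac, ← hlen, ← hpb]

theorem NConcat.isFactorN_blockSpan {t : ℕ → α} {b : ℕ → List α} (ht : NConcat t b) (j k : ℕ) :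
    IsFactorN (blockSpan b j k) t := by
  obtain ⟨p, -, hp, hpb⟩ := ht
  exact ⟨p j, (NConcat.blockSpan_eq hp hpb j k).2⟩

theorem NConcat.regroup {t : ℕ → α} {b : ℕ → List α} (ht : NConcat t b) {q : ℕ → ℕ}
    (hq0 : q 0 = 0) (hq : Monotone q) :
    NConcat t fun n => blockSpan b (q n) (q (n + 1) - q n) := by
  obtain ⟨p, hp0, hp, hpb⟩ := ht
  refine ⟨p ∘ q, by simp [hq0, hp0], fun n => ?_, fun n => ?_⟩
  all_goals
    have h := NConcat.blockSpan_eq hp hpb (q n) (q (n + 1) - q n)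
    rw [Nat.add_sub_cancel' (hq n.le_succ)] at h
  exacts [h.1, h.2]

end Blocks

section Extensions

variable {α : Type*}

/-- `extensionsBad B P w k` checks that every extension of `w` by `k` words from `B` has a
prefix satisfying `P`. -/
def extensionsBad (B : List (List α)) (P : List α → Prop) [DecidablePred P] :
    List α → ℕ → Bool
  | w, 0 => decide (P w)
  | w, k + 1 => decide (P w) || B.all fun x => extensionsBad B P (w ++ x) k

theorem NConcat.extensionsBad_eq_false {t : ℕ → α} {b : ℕ → List α} (ht : NConcat t b)
    {B : List (List α)} {P : List α → Prop} [DecidablePred P]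
    (hP : ∀ w, IsFactorN w t → ¬ P w) {j k : ℕ} (hB : ∀ i, j + k ≤ i → b i ∈ B) (m : ℕ) :
    extensionsBad B P (blockSpan b j k) m = false := by
  induction m generalizing k with
  | zero => simpa [extensionsBad] using hP _ (ht.isFactorN_blockSpan j k)
  | succ m ih =>
    simp only [extensionsBad, Bool.or_eq_false_iff, decide_eq_false_iff_not, List.all_eq_false]
    refine ⟨hP _ (ht.isFactorN_blockSpan j k), b (j + k), hB _ le_rfl, ?_⟩
    rw [← blockSpan_succ, ih fun i hi => hB i (by omega)]
    decide

end Extensions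

def blocksB : List (List (Fin 3)) := [[0,1], [0,1,2], [0,1,2,1], [0,2], [0,2,1,2]]

def HasBadFactor (w : List (Fin 3)) : Prop := w.HasSquare ∨ ∃ p ∈ Forbidden, p <:+: w

instance (w : List (Fin 3)) : Decidable (HasBadFactor w) := by
  unfold HasBadFactor; infer_instance

theorem GoodN.not_hasBadFactor {t : ℕ → Fin 3} (hg : GoodN t) {w : List (Fin 3)}
    (hw : IsFactorN w t) : ¬ HasBadFactor w := by
  rintro (hsq | ⟨p, hp, hpw⟩)
  · obtain ⟨x, hx, hxw⟩ := hsq.exists_infix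
    exact hg.1 x hx (hw.of_infix hxw)
  · exact hg.2 p hp (hw.of_infix hpw)

theorem extensionsBad_after_twelve : ∀ x ∈ blocksB, x ≠ [0,2] →
    extensionsBad blocksB HasBadFactor ([0,1] ++ x) 2 = true := by
  decide

theorem extensionsBad_around_thirteen : ∀ v ∈ [0,1,0,2] :: blocksB, ∀ x ∈ blocksB, x ≠ [0,1] →
    extensionsBad blocksB HasBadFactor (v ++ x ++ [0,2]) 3 = true := by
  decide

section Grouping

variable {α : Type*} [DecidableEq α]

def groupStarts (b : ℕ → List α) (u : List α) : ℕ → ℕ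
  | 0 => 0
  | n + 1 => groupStarts b u n + if b (groupStarts b u n) = u then 2 else 1

theorem groupStarts_monotone (b : ℕ → List α) (u : List α) : Monotone (groupStarts b u) :=
  monotone_nat_of_le_succ fun n => by simp only [groupStarts]; split_ifs <;> omega

theorem blockSpan_groupStarts (b : ℕ → List α) (u : List α) (n : ℕ) :
    blockSpan b (groupStarts b u n) (groupStarts b u (n + 1) - groupStarts b u n) =
      if b (groupStarts b u n) = u then b (groupStarts b u n) ++ b (groupStarts b u n + 1)
      else b (groupStarts b u n) := by
  simp only [groupStarts]
  split_ifs <;> simp [blockSpan, List.range_succ]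

end Grouping

section GoodBlockWords

variable {t : ℕ → Fin 3} {b : ℕ → List (Fin 3)}

theorem eq_thirteen_of_eq_twelve (hb : ∀ i, 1 ≤ i → b i ∈ blocksB) (ht : NConcat t b)
    (hg : GoodN t) {i : ℕ} (hi : b i = [0,1]) : b (i + 1) = [0,2] := by
  by_contra hne
  have hspan : blockSpan b i 2 = [0,1] ++ b (i + 1) := by simp [blockSpan, List.range_succ, hi]
  have h := ht.extensionsBad_eq_false (fun _ => hg.not_hasBadFactor) (j := i) (k := 2)
    (fun l hl => hb l (by omega)) 2
  rw [hspan, extensionsBad_after_twelve _ (hb _ (by omega)) hne] at h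
  exact Bool.noConfusion h

theorem mem_cons_blocksB (hb0 : b 0 = [0,1,0,2]) (hb : ∀ i, 1 ≤ i → b i ∈ blocksB) (i : ℕ) :
    b i ∈ [0,1,0,2] :: blocksB := by
  rcases i with _ | i
  exacts [hb0 ▸ List.mem_cons_self, List.mem_cons_of_mem _ (hb _ (by omega))]

theorem eq_twelve_of_eq_thirteen (hb0 : b 0 = [0,1,0,2]) (hb : ∀ i, 1 ≤ i → b i ∈ blocksB)
    (ht : NConcat t b) (hg : GoodN t) {j : ℕ} (hj : b (j + 1) = [0,2]) : b j = [0,1] := by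
  by_contra hne
  cases j with
  | zero =>
    have hspan : blockSpan b 0 2 = [0,1,0,2,0,2] := by simp [blockSpan, List.range_succ, hb0, hj]
    exact hg.not_hasBadFactor (ht.isFactorN_blockSpan 0 2) (by rw [hspan]; decide)
  | succ m =>
    have hspan : blockSpan b m 3 = b m ++ b (m + 1) ++ [0,2] := by
      simp [blockSpan, List.range_succ, hj]
    have h := ht.extensionsBad_eq_false (fun _ => hg.not_hasBadFactor) (j := m) (k := 3)
      (fun l hl => hb l (by omega)) 3
    rw [hspan, extensionsBad_around_thirteen _ (mem_cons_blocksB hb0 hb m) _ (hb _ (by omega)) hne]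
      at h
    exact Bool.noConfusion h

theorem ne_thirteen_groupStarts (hb0 : b 0 = [0,1,0,2]) (hb : ∀ i, 1 ≤ i → b i ∈ blocksB)
    (ht : NConcat t b) (hg : GoodN t) (n : ℕ) : b (groupStarts b [0,1] n) ≠ [0,2] := by
  rcases n with _ | n
  · simp [groupStarts, hb0]
  · simp only [groupStarts]
    split_ifs with h
    · intro h2
      have h13 := eq_thirteen_of_eq_twelve hb ht hg h
      exact absurd (eq_twelve_of_eq_thirteen hb0 hb ht hg h2) (by rw [h13]; decide)
    · exact fun h1 => h (eq_twelve_of_eq_thirteen hb0 hb ht hg h1)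

end GoodBlockWords

/-- A good ω-word of the form `1213·b₁·b₂⋯` with each `bᵢ ∈ {12,123,1232,13,1323}`
is an infinite concatenation of blocks from `{1213, 123, 1232, 1323}`. -/
theorem stmt_9 (b : ℕ → List (Fin 3)) (hb0 : b 0 = [0,1,0,2])
    (hb : ∀ i, 1 ≤ i → b i ∈ [[0,1], [0,1,2], [0,1,2,1], [0,2], [0,2,1,2]])
    (t : ℕ → Fin 3) (ht : NConcat t b) (hg : GoodN t) :
    ∃ c : ℕ → List (Fin 3),
      (∀ i, c i ∈ [[0,1,0,2], [0,1,2], [0,1,2,1], [0,2,1,2]]) ∧ NConcat t c := by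
  refine ⟨_, fun n => ?_, ht.regroup rfl (groupStarts_monotone b [0,1])⟩
  rw [blockSpan_groupStarts]
  have hne := ne_thirteen_groupStarts hb0 hb ht hg n
  split_ifs with h
  · rw [h, eq_thirteen_of_eq_twelve hb ht hg h]
    simp
  · have hmem := mem_cons_blocksB hb0 hb (groupStarts b [0,1] n)
    simp only [blocksB, List.mem_cons, List.not_mem_nil, or_false] at hmem
    rcases hmem with h' | h' | h' | h' | h' | h' <;> simp_all
end
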